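/- Let H be a complex Hilbert space and let A ⊆ B(H) be a norm-closed (not necessarily unital, not necessarily self-adjoint) subalgebra. If e ∈ A is a contractive quasi-identity of A (‖e‖ ≤ 1 and a = e∘a + a∘e − e∘a∘e for all a ∈ A), then e is self-adjoint (e* = e, hence an orthogonal projection), and e is the unique contractive quasi-identity of A: any e' ∈ A with ‖e'‖ ≤ 1 and a = e'∘a + a∘e' − e'∘a∘e' for all a ∈ A satisfies e' = e. -/

import Mathlib

/-!
Taking `a = e` in the quasi-identity relation gives `e (e² - e) = e² - e`, so
`e^(n+1) - e = n (e² - e)` for every `n`. Since `‖e‖ ≤ 1` the left side stays bounded, hence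
`e² = e`. A contractive idempotent on a Hilbert space has range orthogonal to its kernel:
for `u` in the range and `v` in the kernel, `u` is the image of every `u + t v`, so
`‖u‖ ≤ ‖u + t v‖` for all scalars `t`, which forces `⟪u, v⟫ = 0`. So `e` is a self-adjoint
projection. For two such projections `p, q`, the relation for `p` applied to `q` reads
`(q - q p)* (q - q p) = 0`, so `q p = q` by the C*-identity; symmetrically `p q = p`, and
taking adjoints gives `p = q`.
-/

open scoped InnerProductSpace
open RCLike

def IsQuasiIdentity {R : Type*} [NonUnitalRing R] (S : Set R) (e : R) : Prop :=
  ∀ a ∈ S, a = e * a + a * e - e * a * e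

theorem pow_succ_sub_self_eq_nsmul {R : Type*} [Ring R] {x : R}
    (h : x * (x * x - x) = x * x - x) (n : ℕ) : x ^ (n + 1) - x = n • (x * x - x) := by
  induction n with
  | zero => simp
  | succ n ih =>
    calc x ^ (n + 2) - x = x * (x ^ (n + 1) - x) + (x * x - x) := by
          rw [pow_succ' x (n + 1)]; noncomm_ring
      _ = (n + 1) • (x * x - x) := by rw [ih, mul_smul_comm, h, succ_nsmul]

theorem isIdempotentElem_of_norm_le_one_of_mul_mul_self_sub_self {R : Type*} [NormedRing R]
    [NormedSpace ℝ R] {x : R} (hx : ‖x‖ ≤ 1) (h : x * (x * x - x) = x * x - x) :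
    IsIdempotentElem x := by
  have hbound : ∀ n : ℕ, n * ‖x * x - x‖ ≤ 2 := fun n => by
    calc n * ‖x * x - x‖ = ‖x ^ (n + 1) - x‖ := by
          rw [pow_succ_sub_self_eq_nsmul h, RCLike.norm_nsmul ℝ, nsmul_eq_mul]
      _ ≤ ‖x ^ (n + 1)‖ + ‖x‖ := norm_sub_le _ _
      _ ≤ ‖x‖ ^ (n + 1) + ‖x‖ := by gcongr; exact norm_pow_le' x n.succ_pos
      _ ≤ 2 := by nlinarith [pow_le_one₀ (norm_nonneg x) hx (n := n + 1)]
  have hzero : ‖x * x - x‖ = 0 := by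
    by_contra hne
    obtain ⟨n, hn⟩ := exists_nat_gt (2 / ‖x * x - x‖)
    rw [div_lt_iff₀ (lt_of_le_of_ne (norm_nonneg _) (Ne.symm hne))] at hn
    linarith [hbound n]
  exact sub_eq_zero.mp (norm_eq_zero.mp hzero)

section InnerProductSpace

variable {𝕜 E : Type*} [RCLike 𝕜] [NormedAddCommGroup E] [InnerProductSpace 𝕜 E]

theorem re_inner_eq_zero_of_forall_norm_le_norm_add_real_smul {x y : E}
    (h : ∀ t : ℝ, ‖x‖ ≤ ‖x + (t : 𝕜) • y‖) : re ⟪x, y⟫_𝕜 = 0 := by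
  have hquad : ∀ t : ℝ, 0 ≤ ‖y‖ ^ 2 * (t * t) + 2 * re ⟪x, y⟫_𝕜 * t + 0 := by
    intro t
    have hsq := pow_le_pow_left₀ (norm_nonneg x) (h t) 2
    rw [norm_add_sq (𝕜 := 𝕜), inner_smul_right, re_ofReal_mul, norm_smul, norm_ofReal, mul_pow,
      sq_abs] at hsq
    nlinarith
  have hdiscrim := discrim_le_zero hquad
  rw [discrim] at hdiscrim
  nlinarith [sq_nonneg (re ⟪x, y⟫_𝕜)]

theorem inner_eq_zero_of_forall_norm_le_norm_add_smul {x y : E}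
    (h : ∀ t : 𝕜, ‖x‖ ≤ ‖x + t • y‖) : ⟪x, y⟫_𝕜 = 0 := by
  have hre := re_inner_eq_zero_of_forall_norm_le_norm_add_real_smul (𝕜 := 𝕜) (x := x)
    (y := ⟪y, x⟫_𝕜 • y) fun t => by simpa only [smul_smul] using h _
  rw [inner_smul_right, ← inner_conj_symm, RCLike.conj_mul, ← ofReal_pow, ofReal_re] at hre
  exact norm_eq_zero.mp ((pow_eq_zero_iff two_ne_zero).mp hre)

theorem IsIdempotentElem.isOrtho_range_ker_of_norm_le_one {T : E →L[𝕜] E}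
    (hT : IsIdempotentElem T) (hnorm : ‖T‖ ≤ 1) :
    LinearMap.range T.toLinearMap ⟂ LinearMap.ker T.toLinearMap := by
  rw [Submodule.isOrtho_iff_inner_eq]
  rintro _ ⟨w, rfl⟩ v hv
  refine inner_eq_zero_of_forall_norm_le_norm_add_smul fun t => ?_
  have hTw : T (T w) = T w := DFunLike.congr_fun hT.eq w
  have hTv : T v = 0 := hv
  have hfix : T (T w + t • v) = T w := by rw [map_add, map_smul, hTw, hTv, smul_zero, add_zero]
  calc ‖T w‖ = ‖T (T w + t • v)‖ := by rw [hfix]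
    _ ≤ ‖T‖ * ‖T w + t • v‖ := T.le_opNorm _
    _ ≤ ‖T w + t • v‖ := mul_le_of_le_one_left (norm_nonneg _) hnorm

theorem IsIdempotentElem.isSelfAdjoint_of_norm_le_one [CompleteSpace E] {T : E →L[𝕜] E}
    (hT : IsIdempotentElem T) (hnorm : ‖T‖ ≤ 1) : IsSelfAdjoint T :=
  ContinuousLinearMap.isSelfAdjoint_iff_isSymmetric.mpr <|
    (LinearMap.IsIdempotentElem.isSymmetric_iff_isOrtho_range_ker
      (ContinuousLinearMap.IsIdempotentElem.toLinearMap hT)).mpr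
      (hT.isOrtho_range_ker_of_norm_le_one hnorm)

end InnerProductSpace

namespace IsQuasiIdentity

variable {R : Type*} {S : Set R}

theorem mul_mul_self_sub_self [NonUnitalRing R] {e : R} (he : IsQuasiIdentity S e)
    (heS : e ∈ S) : e * (e * e - e) = e * e - e :=
  calc e * (e * e - e) = e * e - (e * e + e * e - e * e * e) := by noncomm_ring
    _ = e * e - e := by rw [← he e heS]

theorem isIdempotentElem_of_norm_le_one [NormedRing R] [NormedSpace ℝ R] {e : R}
    (he : IsQuasiIdentity S e) (heS : e ∈ S) (hnorm : ‖e‖ ≤ 1) : IsIdempotentElem e :=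
  isIdempotentElem_of_norm_le_one_of_mul_mul_self_sub_self hnorm (he.mul_mul_self_sub_self heS)

theorem isStarProjection_of_norm_le_one {𝕜 E : Type*} [RCLike 𝕜] [NormedAddCommGroup E]
    [InnerProductSpace 𝕜 E] [CompleteSpace E] {S : Set (E →L[𝕜] E)} {e : E →L[𝕜] E}
    (he : IsQuasiIdentity S e) (heS : e ∈ S) (hnorm : ‖e‖ ≤ 1) : IsStarProjection e :=
  letI := NormedSpace.restrictScalars ℝ 𝕜 (E →L[𝕜] E)
  have hidem := he.isIdempotentElem_of_norm_le_one heS hnorm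
  ⟨hidem, hidem.isSelfAdjoint_of_norm_le_one hnorm⟩

variable [NonUnitalNormedRing R] [StarRing R] [CStarRing R]

theorem mul_eq_self_of_isStarProjection {p q : R} (hp : IsQuasiIdentity S p)
    (hp' : IsSelfAdjoint p) (hq : IsStarProjection q) (hqS : q ∈ S) : q * p = q := by
  have hzero : star (q - q * p) * (q - q * p) = 0 := by
    rw [star_sub, star_mul, hp'.star_eq, hq.isSelfAdjoint.star_eq]
    calc (q - p * q) * (q - q * p) = q * q - q * q * p - p * (q * q) + p * (q * q) * p := by
          noncomm_ring
      _ = q - (p * q + q * p - p * q * p) := by rw [hq.isIdempotentElem.eq]; noncomm_ring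
      _ = 0 := by rw [← hp q hqS, sub_self]
  exact (sub_eq_zero.mp ((CStarRing.star_mul_self_eq_zero_iff _).mp hzero)).symm

theorem eq_of_isStarProjection {p q : R} (hp : IsQuasiIdentity S p) (hq : IsQuasiIdentity S q)
    (hp' : IsStarProjection p) (hq' : IsStarProjection q) (hpS : p ∈ S) (hqS : q ∈ S) :
    p = q :=
  calc p = star p := hp'.isSelfAdjoint.star_eq.symm
    _ = star (p * q) := by rw [hq.mul_eq_self_of_isStarProjection hq'.isSelfAdjoint hp' hpS]
    _ = q * p := by rw [star_mul, hp'.isSelfAdjoint.star_eq, hq'.isSelfAdjoint.star_eq]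
    _ = q := hp.mul_eq_self_of_isStarProjection hp'.isSelfAdjoint hq' hqS

end IsQuasiIdentity

theorem stmt_6_general {H : Type*} [NormedAddCommGroup H] [InnerProductSpace ℂ H] [CompleteSpace H]
    (A : NonUnitalSubalgebra ℂ (H →L[ℂ] H))
    (e : H →L[ℂ] H) (heA : e ∈ A) (hnorm : ‖e‖ ≤ 1)
    (he : ∀ a ∈ A, a = e * a + a * e - e * a * e) :
    ContinuousLinearMap.adjoint e = e ∧
      ∀ e' ∈ A, ‖e'‖ ≤ 1 → (∀ a ∈ A, a = e' * a + a * e' - e' * a * e') → e' = e := by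
  have hquasi : IsQuasiIdentity (A : Set (H →L[ℂ] H)) e := he
  have hproj := hquasi.isStarProjection_of_norm_le_one heA hnorm
  refine ⟨hproj.isSelfAdjoint.adjoint_eq, fun e' he'A he'norm he' => ?_⟩
  have hquasi' : IsQuasiIdentity (A : Set (H →L[ℂ] H)) e' := he'
  exact hquasi'.eq_of_isStarProjection hquasi
    (hquasi'.isStarProjection_of_norm_le_one he'A he'norm) hproj he'A heA

/-- A contractive quasi-identity of a norm-closed subalgebra of `B(H)` is
self-adjoint (hence an orthogonal projection) and unique. -/
theorem stmt_6 {H : Type*} [NormedAddCommGroup H] [InnerProductSpace ℂ H] [CompleteSpace H]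
    (A : NonUnitalSubalgebra ℂ (H →L[ℂ] H)) (hA : IsClosed (A : Set (H →L[ℂ] H)))
    (e : H →L[ℂ] H) (heA : e ∈ A) (hnorm : ‖e‖ ≤ 1)
    (he : ∀ a ∈ A, a = e * a + a * e - e * a * e) :
    ContinuousLinearMap.adjoint e = e ∧
      ∀ e' ∈ A, ‖e'‖ ≤ 1 → (∀ a ∈ A, a = e' * a + a * e' - e' * a * e') → e' = e :=
  stmt_6_general A e heA hnorm he
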